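/- arXiv:1602.02128 — 3 statements merged into one kernel-verified Lean document; each statement's English description precedes it below -/
import Mathlib

section
/- Quantified interfacial entropy dissipation: let n ∈ ℝ^d be a unit vector and λ* > 0. Suppose G : Ω² → ℝ^m and ξ_num : Ω² → ℝ are such that for all (u,v) ∈ Ω²: u − (1/λ*)(G(u,v) − f(u)·n) ∈ Ω and ξ_num(u,v) − ξ(u)·n ≤ −λ*[η(u − (1/λ*)(G(u,v) − f(u)·n)) − η(u)]. Define X(u,v) = ξ(u)·n + Dη(u)(G(u,v) − f(u)·n). Then for all (u,v) ∈ Ω²: X(u,v) − ξ_num(u,v) ≥ (β₀/(2λ*)) |G(u,v) − f(u)·n|². -/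
/-!
Since `D²η ≥ β₀`, the entropy lies above its tangent plane at `u` plus `β₀/2 ‖·‖²`. Evaluated at
the updated state `u - (G - f·n)/λ*`, which stays in `Ω`, and multiplied by `λ*`, this bounds the
entropy drop `-λ*[η(u - (G - f·n)/λ*) - η(u)]` by `Dη(u)(G - f·n) - β₀/(2λ*) ‖G - f·n‖²`; the
hypothesis on `ξ_num` then gives the claim.
-/

open MeasureTheory Metric Set
set_option autoImplicit false
set_option maxHeartbeats 1000000
noncomputable section

/-- `Rs k` is the Euclidean space `ℝ^k`. -/
abbrev Rs (k : ℕ) : Type := EuclideanSpace ℝ (Fin k)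

theorem tangent_add_sq_le_of_hasDerivAt2_ge {g g' g'' : ℝ → ℝ} {x y c : ℝ} (hxy : x < y)
    (hg : ∀ t ∈ Icc x y, HasDerivAt g (g' t) t) (hg' : ∀ t ∈ Icc x y, HasDerivAt g' (g'' t) t)
    (hc : ∀ t ∈ Icc x y, c ≤ g'' t) :
    g x + g' x * (y - x) + c / 2 * (y - x) ^ 2 ≤ g y := by
  set h : ℝ → ℝ := fun t => g t - c / 2 * t ^ 2
  have hh : ∀ t ∈ Icc x y, HasDerivAt h (g' t - c * t) t := fun t ht =>
    ((hg t ht).sub ((hasDerivAt_pow 2 t).const_mul (c / 2))).congr_deriv (by norm_num; ring)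
  have hh' : ∀ t ∈ Icc x y, HasDerivAt (fun t => g' t - c * t) (g'' t - c) t := fun t ht =>
    ((hg' t ht).sub ((hasDerivAt_id t).const_mul c)).congr_deriv (by ring)
  have h_convex : ConvexOn ℝ (Icc x y) h := by
    refine convexOn_of_hasDerivWithinAt2_nonneg (f' := fun t => g' t - c * t)
      (f'' := fun t => g'' t - c) (convex_Icc x y)
      (fun t ht => (hh t ht).continuousAt.continuousWithinAt)
      (fun t ht => ?_) (fun t ht => ?_) (fun t ht => ?_) <;>
      rw [interior_Icc] at ht <;> have ht' := Ioo_subset_Icc_self ht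
    · exact (hh t ht').hasDerivWithinAt
    · exact (hh' t ht').hasDerivWithinAt
    · exact sub_nonneg.2 (hc t ht')
  have h_slope := h_convex.le_slope_of_hasDerivAt (left_mem_Icc.2 hxy.le)
    (right_mem_Icc.2 hxy.le) hxy (hh x (left_mem_Icc.2 hxy.le))
  rw [slope_def_field, le_div_iff₀ (sub_pos.2 hxy)] at h_slope
  simp only [h] at h_slope
  linarith

theorem Convex.tangent_add_sq_le_of_hessian_ge {E : Type*} [NormedAddCommGroup E]
    [NormedSpace ℝ E] {S : Set E} (hS : Convex ℝ S) {η : E → ℝ}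
    (hη : ∀ x ∈ S, ContDiffAt ℝ 2 η x) {c : ℝ}
    (hc : ∀ x ∈ S, ∀ w : E, c * ‖w‖ ^ 2 ≤ fderiv ℝ (fderiv ℝ η) x w w)
    {a b : E} (ha : a ∈ S) (hb : b ∈ S) :
    η a + fderiv ℝ η a (b - a) + c / 2 * ‖b - a‖ ^ 2 ≤ η b := by
  set w := b - a
  set L : ℝ → E := fun t => a + t • w
  have hL : ∀ t, HasDerivAt L w t := fun t => by
    simpa [L] using ((hasDerivAt_id t).smul_const w).const_add a
  have hLS : ∀ t ∈ Icc (0 : ℝ) 1, L t ∈ S := fun t ht => hS.add_smul_sub_mem ha hb ht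
  have hg : ∀ t ∈ Icc (0 : ℝ) 1, HasDerivAt (fun t => η (L t)) (fderiv ℝ η (L t) w) t :=
    fun t ht => ((hη _ (hLS t ht)).differentiableAt two_ne_zero).hasFDerivAt.comp_hasDerivAt t (hL t)
  have hg' : ∀ t ∈ Icc (0 : ℝ) 1,
      HasDerivAt (fun t => fderiv ℝ η (L t) w) (fderiv ℝ (fderiv ℝ η) (L t) w w) t := by
    intro t ht
    have hDη : ContDiffAt ℝ 1 (fderiv ℝ η) (L t) := (hη _ (hLS t ht)).fderiv_right (by norm_num)
    exact ((hDη.differentiableAt one_ne_zero).hasFDerivAt.comp_hasDerivAt t (hL t)).clm_apply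
      (hasDerivAt_const t w) |>.congr_deriv (by simp)
  have h := tangent_add_sq_le_of_hasDerivAt2_ge zero_lt_one hg hg'
    (fun t ht => hc (L t) (hLS t ht) w)
  simp only [L, zero_smul, add_zero, one_smul, sub_zero, one_pow, mul_one, w,
    add_sub_cancel] at h
  linarith

theorem Convex.sq_div_le_fderiv_add_mul_sub_of_hessian_ge {E : Type*} [NormedAddCommGroup E]
    [NormedSpace ℝ E] {S : Set E} (hS : Convex ℝ S) {η : E → ℝ}
    (hη : ∀ x ∈ S, ContDiffAt ℝ 2 η x) {c : ℝ}
    (hc : ∀ x ∈ S, ∀ w : E, c * ‖w‖ ^ 2 ≤ fderiv ℝ (fderiv ℝ η) x w w)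
    {lam : ℝ} (hlam : 0 < lam) {u w : E} (hu : u ∈ S) (hu' : u - (1 / lam) • w ∈ S) :
    c / (2 * lam) * ‖w‖ ^ 2 ≤ fderiv ℝ η u w + lam * (η (u - (1 / lam) • w) - η u) := by
  have h := hS.tangent_add_sq_le_of_hessian_ge hη hc hu hu'
  have hstep : u - (1 / lam) • w - u = -((1 / lam) • w) := sub_sub_cancel_left u _
  rw [hstep, map_neg, map_smul, smul_eq_mul, norm_neg, norm_smul, Real.norm_of_nonneg
    (by positivity)] at h
  have h' := mul_le_mul_of_nonneg_left h hlam.le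
  field_simp at h' ⊢
  linarith

theorem interfacial_entropy_dissipation_general
    (d m : ℕ)
    (Ω : Set (Rs m)) (hΩconv : Convex ℝ Ω)
    (f : Fin d → Rs m → Rs m)
    (η : Rs m → ℝ) (ξ : Fin d → Rs m → ℝ)
    (hη : ∃ V : Set (Rs m), IsOpen V ∧ closure Ω ⊆ V ∧ ContDiffOn ℝ 2 η V)
    (β₀ β₁ : ℝ)
    (hHess : ∀ u ∈ closure Ω, ∀ w : Rs m,
      β₀ * ‖w‖ ^ (2 : ℕ) ≤ fderiv ℝ (fderiv ℝ η) u w w ∧ fderiv ℝ (fderiv ℝ η) u w w ≤ β₁ * ‖w‖ ^ (2 : ℕ))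
    (n : Rs d) (lam : ℝ) (hlam : 0 < lam)
    (G : Rs m → Rs m → Rs m) (Ξ : Rs m → Rs m → ℝ)
    (hstab : ∀ u ∈ Ω, ∀ v ∈ Ω, u - (1 / lam) • (G u v - ∑ α, n α • f α u) ∈ Ω)
    (hineq : ∀ u ∈ Ω, ∀ v ∈ Ω,
      Ξ u v - ∑ α, n α * ξ α u ≤
        -lam * (η (u - (1 / lam) • (G u v - ∑ α, n α • f α u)) - η u)) :
    ∀ u ∈ Ω, ∀ v ∈ Ω,
      ((∑ α, n α * ξ α u) + fderiv ℝ η u (G u v - ∑ α, n α • f α u)) - Ξ u v ≥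
        β₀ / (2 * lam) * ‖G u v - ∑ α, n α • f α u‖ ^ (2 : ℕ) := by
  intro u hu v hv
  obtain ⟨V, hVopen, hΩV, hηV⟩ := hη
  have hηΩ : ∀ x ∈ Ω, ContDiffAt ℝ 2 η x :=
    fun x hx => hηV.contDiffAt (hVopen.mem_nhds (hΩV (subset_closure hx)))
  have h_step := hΩconv.sq_div_le_fderiv_add_mul_sub_of_hessian_ge hηΩ
    (fun x hx w => (hHess x (subset_closure hx) w).1) hlam hu (hstab u hu v hv)
  linarith [hineq u hu v hv]

/-- Quantified interfacial entropy dissipation (Proposition 2.3). -/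
theorem interfacial_entropy_dissipation
    (d m : ℕ) (hd : 1 ≤ d) (hm : 1 ≤ m)
    (Ω : Set (Rs m)) (hΩconv : Convex ℝ Ω) (hΩbdd : Bornology.IsBounded Ω)
    (f : Fin d → Rs m → Rs m)
    (hf : ∀ α, ∃ V : Set (Rs m), IsOpen V ∧ closure Ω ⊆ V ∧ ContDiffOn ℝ 2 (f α) V)
    (η : Rs m → ℝ) (ξ : Fin d → Rs m → ℝ)
    (hη : ∃ V : Set (Rs m), IsOpen V ∧ closure Ω ⊆ V ∧ ContDiffOn ℝ 2 η V)
    (hξ : ∀ α, ∃ V : Set (Rs m), IsOpen V ∧ closure Ω ⊆ V ∧ ContDiffOn ℝ 2 (ξ α) V)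
    (hηnn : ∀ u ∈ closure Ω, 0 ≤ η u)
    (β₀ β₁ : ℝ) (hβ₀ : 0 < β₀) (hββ : β₀ ≤ β₁)
    (hHess : ∀ u ∈ closure Ω, ∀ w : Rs m,
      β₀ * ‖w‖ ^ (2 : ℕ) ≤ fderiv ℝ (fderiv ℝ η) u w w ∧ fderiv ℝ (fderiv ℝ η) u w w ≤ β₁ * ‖w‖ ^ (2 : ℕ))
    (hξη : ∀ α, ∀ u ∈ Ω, fderiv ℝ (ξ α) u = (fderiv ℝ η u).comp (fderiv ℝ (f α) u))
    (n : Rs d) (hn : ‖n‖ = 1) (lam : ℝ) (hlam : 0 < lam)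
    (G : Rs m → Rs m → Rs m) (Ξ : Rs m → Rs m → ℝ)
    (hstab : ∀ u ∈ Ω, ∀ v ∈ Ω, u - (1 / lam) • (G u v - ∑ α, n α • f α u) ∈ Ω)
    (hineq : ∀ u ∈ Ω, ∀ v ∈ Ω,
      Ξ u v - ∑ α, n α * ξ α u ≤
        -lam * (η (u - (1 / lam) • (G u v - ∑ α, n α • f α u)) - η u)) :
    ∀ u ∈ Ω, ∀ v ∈ Ω,
      ((∑ α, n α * ξ α u) + fderiv ℝ η u (G u v - ∑ α, n α • f α u)) - Ξ u v ≥
        β₀ / (2 * lam) * ‖G u v - ∑ α, n α • f α u‖ ^ (2 : ℕ) :=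
  interfacial_entropy_dissipation_general d m Ω hΩconv f η ξ hη β₀ β₁ hHess n lam hlam G Ξ hstab
    hineq
end
end

section
/- Preservation of the admissible states: assume Ω is moreover closed (hence compact), that u₀(x) ∈ Ω for a.e. x ∈ ℝ^d, and that the CFL condition (Δt/|K|) λ* Σ_{L∈𝒩(K)} |σ_KL| ≤ 1 holds for all K ∈ 𝒯. Then for every K ∈ 𝒯 and every n ∈ {0,…,N_T}, the value u_K^n produced by the finite volume scheme belongs to Ω. -/
/-!
Under the CFL condition the update of a cell is a convex combination of its old value and of the
states `u - (1/λ) (G_KL(u, v) - f(u)·n_KL)`, one per neighbour: the consistency terms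
`f(u)·n_KL` may be inserted for free because `∑_L |σ_KL| n_KL = 0`. The stability assumption puts
these states in `Ω`, so convexity propagates `Ω` from one time step to the next, and the initial
cell averages lie in the closed convex set `Ω` because `u₀` does almost everywhere.
-/

open MeasureTheory Metric Set
set_option autoImplicit false
set_option maxHeartbeats 1000000
noncomputable section

section

variable {E : Type*} [AddCommGroup E] [Module ℝ E] {s : Set E} {ι : Type*}

theorem Convex.add_sum_smul_sub_mem (hs : Convex ℝ s) {t : Finset ι} {θ : ι → ℝ} {w : ι → E}
    {u : E} (hu : u ∈ s) (hw : ∀ i ∈ t, w i ∈ s) (hθ : ∀ i ∈ t, 0 ≤ θ i)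
    (hθ_sum : ∑ i ∈ t, θ i ≤ 1) :
    u + ∑ i ∈ t, θ i • (w i - u) ∈ s := by
  rcases (Finset.sum_nonneg hθ).eq_or_lt with hzero | hpos
  · have hθ_zero : ∀ i ∈ t, θ i = 0 := (Finset.sum_eq_zero_iff_of_nonneg hθ).1 hzero.symm
    rwa [Finset.sum_eq_zero fun i hi => by rw [hθ_zero i hi, zero_smul], add_zero]
  · have hsum : ∑ i ∈ t, θ i • (w i - u) = (∑ i ∈ t, θ i) • (t.centerMass θ w - u) := by
      rw [Finset.centerMass, smul_sub, smul_smul, mul_inv_cancel₀ hpos.ne', one_smul]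
      simp only [smul_sub, Finset.sum_sub_distrib, Finset.sum_smul]
    rw [hsum]
    exact hs.add_smul_sub_mem hu (hs.centerMass_mem hθ hpos hw) ⟨hpos.le, hθ_sum⟩

theorem Convex.sub_smul_sum_smul_mem (hs : Convex ℝ s) {t : Finset ι} {A : ι → ℝ}
    {g F : ι → E} {u : E} {c lam : ℝ} (hu : u ∈ s) (hA : ∀ i ∈ t, 0 ≤ A i) (hc : 0 ≤ c)
    (hlam : 0 < lam) (hF : ∑ i ∈ t, A i • F i = 0) (hcfl : c * lam * ∑ i ∈ t, A i ≤ 1)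
    (hstab : ∀ i ∈ t, u - (1 / lam) • (g i - F i) ∈ s) :
    u - c • ∑ i ∈ t, A i • g i ∈ s := by
  have hcomb : u - c • ∑ i ∈ t, A i • g i
      = u + ∑ i ∈ t, (c * lam * A i) • ((u - (1 / lam) • (g i - F i)) - u) := by
    have hterm : ∀ i, (c * lam * A i) • ((u - (1 / lam) • (g i - F i)) - u)
        = c • (A i • F i) - c • (A i • g i) := fun i => by
      have hscal : c * lam * A i * (1 / lam) = c * A i := by field_simp
      rw [sub_sub_cancel_left, smul_neg, smul_smul, hscal]
      module
    simp only [hterm, Finset.sum_sub_distrib, ← Finset.smul_sum, hF, smul_zero, zero_sub]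
    abel
  rw [hcomb]
  refine hs.add_sum_smul_sub_mem hu hstab (fun i hi => by have := hA i hi; positivity) ?_
  rwa [← Finset.mul_sum]

theorem eq_sub_smul_of_smul_sub_add_smul_eq_zero {v τ : ℝ} {x y S : E} (hv : v ≠ 0) (h : v • (y - x) + τ • S = 0) :
    y = x - (τ / v) • S := by
  have hy : y - x = -(τ / v) • S := by
    rw [← inv_smul_smul₀ hv (y - x), eq_neg_of_add_eq_zero_left h, smul_neg, smul_smul, neg_smul,
      inv_mul_eq_div]
  rw [← sub_add_cancel y x, hy, neg_smul]
  abel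

theorem sum_smul_sum_coord_smul_eq_zero {d : ℕ} {t : Finset ι} {A : ι → ℝ}
    {ν : ι → EuclideanSpace ℝ (Fin d)}
    (hν : ∑ i ∈ t, A i • ν i = 0) (v : Fin d → E) :
    ∑ i ∈ t, A i • ∑ α, ν i α • v α = 0 := by
  have hcoord : ∀ α, ∑ i ∈ t, A i * ν i α = 0 := fun α => by
    simpa [map_sum, smul_eq_mul] using congrArg (EuclideanSpace.proj (𝕜 := ℝ) α) hν
  simp only [Finset.smul_sum, smul_smul]
  rw [Finset.sum_comm]
  simp [← Finset.sum_smul, hcoord]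

end

theorem finite_volume_preserves_admissible_states_general
    (d m : ℕ)
    (Ω : Set (Rs m)) (hΩconv : Convex ℝ Ω)
    (f : Fin d → Rs m → Rs m)
    (hΩcl : IsClosed Ω)
    (ι : Type)
    (Cc : ι → Set (Rs d))
    (hCopen : ∀ K, IsOpen (Cc K)) (hCbdd : ∀ K, Bornology.IsBounded (Cc K))
    (hCne : ∀ K, (Cc K).Nonempty)
    (vol : ι → ℝ) (hvol : ∀ K, vol K = (volume (Cc K)).toReal)
    (Nb : ι → Finset ι)
    (A : ι → ι → ℝ) (hApos : ∀ K L, L ∈ Nb K → 0 < A K L)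
    (ν : ι → ι → Rs d)
    (hνsum : ∀ K, ∑ L ∈ Nb K, A K L • ν K L = 0)
    (lam : ℝ) (hlam : 0 < lam)
    (G : ι → ι → Rs m → Rs m → Rs m)
    (hstab : ∀ lam' : ℝ, lam ≤ lam' → ∀ K L, L ∈ Nb K → ∀ u ∈ Ω, ∀ v ∈ Ω,
      u - (1 / lam') • (G K L u v - ∑ α, ν K L α • f α u) ∈ Ω)
    (u₀ : Rs d → Rs m)
    (hu₀Ω : ∀ᵐ x ∂(volume : Measure (Rs d)), u₀ x ∈ Ω)
    (Δt : ℝ) (hΔt : 0 < Δt)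
    (hu₀int : ∀ K, IntegrableOn u₀ (Cc K))
    (uK : ℕ → ι → Rs m)
    (hinit : ∀ K, uK 0 K = (vol K)⁻¹ • ∫ x in Cc K, u₀ x)
    (hstep : ∀ n K, (vol K) • (uK (n + 1) K - uK n K)
        + Δt • ∑ L ∈ Nb K, A K L • G K L (uK n K) (uK n L) = 0)
    (hCFLcell : ∀ K, Δt / vol K * lam * ∑ L ∈ Nb K, A K L ≤ 1)
    (T : ℝ) :
    ∀ K, ∀ n ≤ Nat.floor (T / Δt + 1), uK n K ∈ Ω := by
  have hμ_ne_zero : ∀ K, volume (Cc K) ≠ 0 := fun K => (hCopen K).measure_ne_zero _ (hCne K)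
  have hμ_ne_top : ∀ K, volume (Cc K) ≠ ⊤ := fun K => (hCbdd K).measure_lt_top.ne
  have hvol_pos : ∀ K, 0 < vol K := fun K =>
    hvol K ▸ ENNReal.toReal_pos (hμ_ne_zero K) (hμ_ne_top K)
  suffices H : ∀ n K, uK n K ∈ Ω from fun K n _ => H n K
  intro n
  induction n with
  | zero =>
    intro K
    rw [hinit K, hvol K, ← measureReal_def, ← setAverage_eq]
    exact hΩconv.set_average_mem hΩcl (hμ_ne_zero K) (hμ_ne_top K) (ae_restrict_of_ae hu₀Ω)
      (hu₀int K)
  | succ n ih =>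
    intro K
    rw [eq_sub_smul_of_smul_sub_add_smul_eq_zero (hvol_pos K).ne' (hstep n K)]
    exact hΩconv.sub_smul_sum_smul_mem (ih K) (fun L hL => (hApos K L hL).le)
      (div_pos hΔt (hvol_pos K)).le hlam
      (sum_smul_sum_coord_smul_eq_zero (hνsum K) fun α => f α (uK n K)) (hCFLcell K)
      fun L hL => hstab lam le_rfl K L hL _ (ih K) _ (ih L)

/-- Preservation of the admissible states (Lemma 2.1). -/
theorem finite_volume_preserves_admissible_states
    (d m : ℕ) (hd : 1 ≤ d) (hm : 1 ≤ m)
    (Ω : Set (Rs m)) (hΩconv : Convex ℝ Ω) (hΩbdd : Bornology.IsBounded Ω)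
    (f : Fin d → Rs m → Rs m)
    (hf : ∀ α, ∃ V : Set (Rs m), IsOpen V ∧ closure Ω ⊆ V ∧ ContDiffOn ℝ 2 (f α) V)
    (hΩcl : IsClosed Ω)
    (ι : Type) [DecidableEq ι] [Countable ι]
    (Cc : ι → Set (Rs d))
    (hCopen : ∀ K, IsOpen (Cc K)) (hCbdd : ∀ K, Bornology.IsBounded (Cc K))
    (hCne : ∀ K, (Cc K).Nonempty)
    (hCdisj : Pairwise (Function.onFun Disjoint Cc))
    (hCcover : (⋃ K, closure (Cc K)) = Set.univ)
    (h : ℝ) (hh0 : 0 < h) (hh1 : h ≤ 1)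
    (hdiam : ∀ K, Metric.diam (Cc K) ≤ h)
    (vol : ι → ℝ) (hvol : ∀ K, vol K = (volume (Cc K)).toReal)
    (Nb : ι → Finset ι) (hNsymm : ∀ K L, L ∈ Nb K ↔ K ∈ Nb L) (hNirr : ∀ K, K ∉ Nb K)
    (A : ι → ι → ℝ) (hAsymm : ∀ K L, A K L = A L K) (hApos : ∀ K L, L ∈ Nb K → 0 < A K L)
    (ν : ι → ι → Rs d)
    (hνunit : ∀ K L, L ∈ Nb K → ‖ν K L‖ = 1)
    (hνanti : ∀ K L, L ∈ Nb K → ν L K = -ν K L)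
    (hνsum : ∀ K, ∑ L ∈ Nb K, A K L • ν K L = 0)
    (a : ℝ) (ha : 0 < a)
    (hvolreg : ∀ K, a * h ^ d ≤ vol K)
    (hperim : ∀ K, ∑ L ∈ Nb K, A K L ≤ h ^ (d - 1) / a)
    (lam : ℝ) (hlam : 0 < lam)
    (G : ι → ι → Rs m → Rs m → Rs m)
    (hGlip : ∀ K L, L ∈ Nb K → ∃ CG : NNReal,
      LipschitzOnWith CG (fun p : Rs m × Rs m => G K L p.1 p.2) (Ω ×ˢ Ω))
    (hGcons : ∀ K L, L ∈ Nb K → ∀ u ∈ Ω, ∀ v ∈ Ω, G K L u v = -G L K v u)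
    (hGconsist : ∀ K L, L ∈ Nb K → ∀ u ∈ Ω, G K L u u = ∑ α, ν K L α • f α u)
    (hstab : ∀ lam' : ℝ, lam ≤ lam' → ∀ K L, L ∈ Nb K → ∀ u ∈ Ω, ∀ v ∈ Ω,
      u - (1 / lam') • (G K L u v - ∑ α, ν K L α • f α u) ∈ Ω)
    (u₀ : Rs d → Rs m) (hu₀meas : Measurable u₀)
    (hu₀Ω : ∀ᵐ x ∂(volume : Measure (Rs d)), u₀ x ∈ Ω)
    (Δt : ℝ) (hΔt : 0 < Δt)
    (hu₀int : ∀ K, IntegrableOn u₀ (Cc K))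
    (uK : ℕ → ι → Rs m)
    (hinit : ∀ K, uK 0 K = (vol K)⁻¹ • ∫ x in Cc K, u₀ x)
    (hstep : ∀ n K, (vol K) • (uK (n + 1) K - uK n K)
        + Δt • ∑ L ∈ Nb K, A K L • G K L (uK n K) (uK n L) = 0)
    (hCFLcell : ∀ K, Δt / vol K * lam * ∑ L ∈ Nb K, A K L ≤ 1)
    (T : ℝ) (hT : 0 < T) :
    ∀ K, ∀ n ≤ Nat.floor (T / Δt + 1), uK n K ∈ Ω :=
  finite_volume_preserves_admissible_states_general d m Ω hΩconv f hΩcl ι Cc hCopen hCbdd hCne vol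
    hvol Nb A hApos ν hνsum lam hlam G hstab u₀ hu₀Ω Δt hΔt hu₀int uK hinit hstep hCFLcell T
end
end

section
/- Bound of the relative entropy fluxes by the relative entropy: for every α ∈ {1,…,d} and all u, v ∈ Ω: |Q_α(v,u)| ≤ L_f H(v,u). -/
open MeasureTheory Metric Set
set_option autoImplicit false
set_option maxHeartbeats 1000000
noncomputable section

/-! Along the segment `γ t = u + t (v - u)`, the relative entropy and the relative entropy flux
have derivatives `(Dη(γ t) - Dη(u)) (v - u)` and `(Dη(γ t) - Dη(u)) z` with `z = Df(γ t) (v - u)`.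
These two increments of `Dη` vanish at `u`, and along the segment their derivatives are
`D²η(v - u, v - u)` and `D²η(v - u, z) = D²η(z, v - u)`, which the Rayleigh-quotient bound
compares pointwise.  Comparing derivatives twice, one comparison inside the other, gives the bound. -/

lemma sub_le_sub_of_hasDerivAt_le {g φ g' φ' : ℝ → ℝ} {a b : ℝ} (hab : a ≤ b)
    (hg : ∀ t ∈ Icc a b, HasDerivAt g (g' t) t) (hφ : ∀ t ∈ Icc a b, HasDerivAt φ (φ' t) t)
    (hle : ∀ t ∈ Icc a b, g' t ≤ φ' t) : g b - g a ≤ φ b - φ a := by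
  have hderiv : ∀ t ∈ Icc a b, HasDerivAt (φ - g) (φ' t - g' t) t :=
    fun t ht => (hφ t ht).sub (hg t ht)
  have hmono : MonotoneOn (φ - g) (Icc a b) := by
    refine monotoneOn_of_hasDerivWithinAt_nonneg (f' := fun t => φ' t - g' t) (convex_Icc a b)
      (fun t ht => (hderiv t ht).continuousAt.continuousWithinAt) (fun t ht => ?_) (fun t ht => ?_)
    · exact (hderiv t (interior_subset ht)).hasDerivWithinAt
    · exact sub_nonneg.2 (hle t (interior_subset ht))
  have := hmono (left_mem_Icc.2 hab) (right_mem_Icc.2 hab) hab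
  simp only [Pi.sub_apply] at this
  linarith

lemma abs_sub_le_sub_of_hasDerivAt_of_abs_le {g φ g' φ' : ℝ → ℝ} {a b : ℝ} (hab : a ≤ b)
    (hg : ∀ t ∈ Icc a b, HasDerivAt g (g' t) t) (hφ : ∀ t ∈ Icc a b, HasDerivAt φ (φ' t) t)
    (hle : ∀ t ∈ Icc a b, |g' t| ≤ φ' t) : |g b - g a| ≤ φ b - φ a := by
  have hup := sub_le_sub_of_hasDerivAt_le hab hg hφ fun t ht => (le_abs_self _).trans (hle t ht)
  have hdown := sub_le_sub_of_hasDerivAt_le hab (fun t ht => (hg t ht).neg) hφ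
    fun t ht => (neg_le_abs _).trans (hle t ht)
  simp only [Pi.neg_apply] at hdown
  rw [abs_le]
  constructor <;> linarith

section RelativeEntropy

variable {E : Type*} [NormedAddCommGroup E] [NormedSpace ℝ E]

def relEntropy (η : E → ℝ) (v u : E) : ℝ :=
  η v - η u - fderiv ℝ η u (v - u)

def relEntropyFlux (η : E → ℝ) (f : E → E) (ξ : E → ℝ) (v u : E) : ℝ :=
  ξ v - ξ u - fderiv ℝ η u (f v - f u)

lemma contDiffAt_of_exists_isOpen_closure_subset {F : Type*} [NormedAddCommGroup F]
    [NormedSpace ℝ F] {n : WithTop ℕ∞} {g : E → F} {Ω : Set E}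
    (h : ∃ V : Set E, IsOpen V ∧ closure Ω ⊆ V ∧ ContDiffOn ℝ n g V) :
    ∀ p ∈ Ω, ContDiffAt ℝ n g p := by
  obtain ⟨V, hVopen, hΩV, hg⟩ := h
  exact fun p hp => hg.contDiffAt (hVopen.mem_nhds (hΩV (subset_closure hp)))

lemma hasDerivAt_fderiv_lineMap_apply {η : E → ℝ} {x y z : E} {t : ℝ}
    (hη : ContDiffAt ℝ 2 η (AffineMap.lineMap x y t)) :
    HasDerivAt (fun σ => fderiv ℝ η (AffineMap.lineMap x y σ) z)
      (fderiv ℝ (fderiv ℝ η) (AffineMap.lineMap x y t) (y - x) z) t := by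
  have hη2 := ((hη.fderiv_right (m := 1) le_rfl).differentiableAt one_ne_zero).hasFDerivAt
  simpa using (hη2.comp_hasDerivAt t AffineMap.hasDerivAt_lineMap).clm_apply
    (hasDerivAt_const t z)

lemma abs_fderiv_lineMap_sub_le {Ω : Set E} (hΩ : Convex ℝ Ω) {η : E → ℝ}
    (hη : ∀ p ∈ Ω, ContDiffAt ℝ 2 η p) {s : ℝ} {x y z : E} (hx : x ∈ Ω) (hy : y ∈ Ω)
    (hz : ∀ p ∈ Ω, |fderiv ℝ (fderiv ℝ η) p z (y - x)|
      ≤ s * fderiv ℝ (fderiv ℝ η) p (y - x) (y - x))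
    {t : ℝ} (ht : t ∈ Icc (0 : ℝ) 1) :
    |fderiv ℝ η (AffineMap.lineMap x y t) z - fderiv ℝ η x z|
      ≤ s * (fderiv ℝ η (AffineMap.lineMap x y t) (y - x) - fderiv ℝ η x (y - x)) := by
  have hmem : ∀ σ ∈ Icc 0 t, AffineMap.lineMap x y σ ∈ Ω :=
    fun σ hσ => hΩ.lineMap_mem hx hy (Icc_subset_Icc le_rfl ht.2 hσ)
  have := abs_sub_le_sub_of_hasDerivAt_of_abs_le ht.1
    (fun σ hσ => hasDerivAt_fderiv_lineMap_apply (z := z) (hη _ (hmem σ hσ)))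
    (fun σ hσ => (hasDerivAt_fderiv_lineMap_apply (z := y - x) (hη _ (hmem σ hσ))).const_mul s)
    (fun σ hσ => by
      rw [(hη _ (hmem σ hσ)).isSymmSndFDerivAt (by norm_num)]
      exact hz _ (hmem σ hσ))
  simpa [mul_sub] using this

theorem abs_relEntropyFlux_le {Ω : Set E} (hΩ : Convex ℝ Ω) {η ξ : E → ℝ} {f : E → E}
    (hη : ∀ p ∈ Ω, ContDiffAt ℝ 2 η p) (hf : ∀ p ∈ Ω, DifferentiableAt ℝ f p)
    (hξ : ∀ p ∈ Ω, DifferentiableAt ℝ ξ p)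
    (hξη : ∀ p ∈ Ω, fderiv ℝ ξ p = (fderiv ℝ η p).comp (fderiv ℝ f p)) {s : ℝ}
    (hs : ∀ p ∈ Ω, ∀ q ∈ Ω, ∀ w : E,
      |fderiv ℝ (fderiv ℝ η) q (fderiv ℝ f p w) w| ≤ s * fderiv ℝ (fderiv ℝ η) q w w)
    {u v : E} (hu : u ∈ Ω) (hv : v ∈ Ω) :
    |relEntropyFlux η f ξ v u| ≤ s * relEntropy η v u := by
  set γ := AffineMap.lineMap (k := ℝ) u v
  have hγ : ∀ t, HasDerivAt γ (v - u) t := fun t => AffineMap.hasDerivAt_lineMap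
  have hmem : ∀ t ∈ Icc (0 : ℝ) 1, γ t ∈ Ω := fun t ht => hΩ.lineMap_mem hu hv ht
  have hlin : ∀ (g : ℝ → E) (g' : E) (t : ℝ), HasDerivAt g g' t →
      HasDerivAt (fun σ => fderiv ℝ η u (g σ)) (fderiv ℝ η u g') t :=
    fun g g' t hg => (fderiv ℝ η u).hasFDerivAt.comp_hasDerivAt t hg
  have hflux : ∀ t ∈ Icc (0 : ℝ) 1, HasDerivAt (fun σ => ξ (γ σ) - fderiv ℝ η u (f (γ σ)))
      (fderiv ℝ η (γ t) (fderiv ℝ f (γ t) (v - u))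
        - fderiv ℝ η u (fderiv ℝ f (γ t) (v - u))) t := by
    intro t ht
    have hξγ := (hξ _ (hmem t ht)).hasFDerivAt.comp_hasDerivAt t (hγ t)
    rw [hξη _ (hmem t ht)] at hξγ
    exact hξγ.sub (hlin _ _ t ((hf _ (hmem t ht)).hasFDerivAt.comp_hasDerivAt t (hγ t)))
  have hentropy : ∀ t ∈ Icc (0 : ℝ) 1, HasDerivAt (fun σ => s * (η (γ σ) - fderiv ℝ η u (γ σ)))
      (s * (fderiv ℝ η (γ t) (v - u) - fderiv ℝ η u (v - u))) t := fun t ht =>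
    (((hη _ (hmem t ht)).differentiableAt two_ne_zero).hasFDerivAt.comp_hasDerivAt t (hγ t)
      |>.sub (hlin _ _ t (hγ t))).const_mul s
  have := abs_sub_le_sub_of_hasDerivAt_of_abs_le zero_le_one hflux hentropy fun t ht =>
    abs_fderiv_lineMap_sub_le hΩ hη hu hv (fun q hq => hs _ (hmem t ht) q hq (v - u)) ht
  convert this using 2
  · simp only [γ, relEntropyFlux, map_sub, AffineMap.lineMap_apply_one,
      AffineMap.lineMap_apply_zero]
    ring
  · simp only [γ, relEntropy, map_sub, AffineMap.lineMap_apply_one,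
      AffineMap.lineMap_apply_zero]
    ring

end RelativeEntropy

theorem relative_entropy_flux_bound_general
    (d m : ℕ)
    (Ω : Set (Rs m)) (hΩconv : Convex ℝ Ω)
    (f : Fin d → Rs m → Rs m)
    (hf : ∀ α, ∃ V : Set (Rs m), IsOpen V ∧ closure Ω ⊆ V ∧ ContDiffOn ℝ 2 (f α) V)
    (η : Rs m → ℝ) (ξ : Fin d → Rs m → ℝ)
    (hη : ∃ V : Set (Rs m), IsOpen V ∧ closure Ω ⊆ V ∧ ContDiffOn ℝ 2 η V)
    (hξ : ∀ α, ∃ V : Set (Rs m), IsOpen V ∧ closure Ω ⊆ V ∧ ContDiffOn ℝ 2 (ξ α) V)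
    (hξη : ∀ α, ∀ u ∈ Ω, fderiv ℝ (ξ α) u = (fderiv ℝ η u).comp (fderiv ℝ (f α) u))
    (s : ℝ)
    (hs : ∀ α, ∀ u ∈ Ω, ∀ v ∈ Ω, ∀ w : Rs m,
      |fderiv ℝ (fderiv ℝ η) v (fderiv ℝ (f α) u w) w|
        ≤ s * fderiv ℝ (fderiv ℝ η) v w w) :
    ∀ α : Fin d, ∀ u ∈ Ω, ∀ v ∈ Ω,
      |ξ α v - ξ α u - fderiv ℝ η u (f α v - f α u)|
        ≤ s * (η v - η u - fderiv ℝ η u (v - u)) := by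
  intro α u hu v hv
  exact abs_relEntropyFlux_le hΩconv (contDiffAt_of_exists_isOpen_closure_subset hη)
    (fun p hp => (contDiffAt_of_exists_isOpen_closure_subset (hf α) p hp).differentiableAt
      two_ne_zero)
    (fun p hp => (contDiffAt_of_exists_isOpen_closure_subset (hξ α) p hp).differentiableAt
      two_ne_zero)
    (hξη α) (hs α) hu hv

/-- Bound of the relative entropy fluxes by the relative entropy (inequality (4.8)):
`|Q_α(v,u)| ≤ L_f H(v,u)`, stated for any constant `s` dominating the Rayleigh
quotients defining `L_f`. -/
theorem relative_entropy_flux_bound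
    (d m : ℕ) (hd : 1 ≤ d) (hm : 1 ≤ m)
    (Ω : Set (Rs m)) (hΩconv : Convex ℝ Ω) (hΩbdd : Bornology.IsBounded Ω)
    (f : Fin d → Rs m → Rs m)
    (hf : ∀ α, ∃ V : Set (Rs m), IsOpen V ∧ closure Ω ⊆ V ∧ ContDiffOn ℝ 2 (f α) V)
    (η : Rs m → ℝ) (ξ : Fin d → Rs m → ℝ)
    (hη : ∃ V : Set (Rs m), IsOpen V ∧ closure Ω ⊆ V ∧ ContDiffOn ℝ 2 η V)
    (hξ : ∀ α, ∃ V : Set (Rs m), IsOpen V ∧ closure Ω ⊆ V ∧ ContDiffOn ℝ 2 (ξ α) V)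
    (hηnn : ∀ u ∈ closure Ω, 0 ≤ η u)
    (β₀ β₁ : ℝ) (hβ₀ : 0 < β₀) (hββ : β₀ ≤ β₁)
    (hHess : ∀ u ∈ closure Ω, ∀ w : Rs m,
      β₀ * ‖w‖ ^ (2 : ℕ) ≤ fderiv ℝ (fderiv ℝ η) u w w ∧ fderiv ℝ (fderiv ℝ η) u w w ≤ β₁ * ‖w‖ ^ (2 : ℕ))
    (hξη : ∀ α, ∀ u ∈ Ω, fderiv ℝ (ξ α) u = (fderiv ℝ η u).comp (fderiv ℝ (f α) u))
    (s : ℝ)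
    (hs : ∀ α, ∀ u ∈ Ω, ∀ v ∈ Ω, ∀ w : Rs m,
      |fderiv ℝ (fderiv ℝ η) v (fderiv ℝ (f α) u w) w|
        ≤ s * fderiv ℝ (fderiv ℝ η) v w w) :
    ∀ α : Fin d, ∀ u ∈ Ω, ∀ v ∈ Ω,
      |ξ α v - ξ α u - fderiv ℝ η u (f α v - f α u)|
        ≤ s * (η v - η u - fderiv ℝ η u (v - u)) :=
  relative_entropy_flux_bound_general d m Ω hΩconv f hf η ξ hη hξ hξη s hs
end
end
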